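/- Let X be a smooth projective variety and D an integral effective divisor on X. Then H^0(X, D) = H^0(X, D − ⌈N_σ(D)⌉), i.e., every effective divisor linearly equivalent to D contains the roundup of the negative part N_σ(D) of the Nakayama–Zariski decomposition of D. -/

import Mathlib

/-- `σ_Γ(D) = inf { mult_Γ D' : 0 ≤ D' ∼_ℝ D }`; R-linear equivalence is modeled by the
submodule `P` of principal R-divisors. -/
noncomputable def sigmaG {ι : Type*} (P : Submodule ℝ (ι → ℝ)) (Γ : ι) (D : ι → ℝ) : ℝ :=
  ⨅ D' : {D' : ι → ℝ // (∀ i, 0 ≤ D' i) ∧ D' - D ∈ P}, (D' : ι → ℝ) Γ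

/-!
Fix an effective `G ∼ D`. If some `D + ε₀A` admits an effective representative `D₀`, then for
`0 < ε ≤ ε₀` the convex combination `(ε/ε₀) D₀ + (1 - ε/ε₀) G` is an effective representative
of `D + εA`, so `σ_Γ(D + εA) ≤ (ε/ε₀) mult_Γ D₀ + (1 - ε/ε₀) mult_Γ G`, which tends to
`mult_Γ G` as `ε → 0`. Otherwise every `σ_Γ(D + εA)` is an infimum over the empty set, which
is `0` by convention, so the limit is `0 ≤ mult_Γ G`. Since `mult_Γ G` is an integer, the
bound passes to the roundup.
-/

open Filter Topology

section SigmaG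

variable {ι : Type*} {P : Submodule ℝ (ι → ℝ)} {Γ : ι}

theorem sigmaG_le {E D' : ι → ℝ} (hD' : ∀ i, 0 ≤ D' i) (hE : D' - E ∈ P) :
    sigmaG P Γ E ≤ D' Γ := by
  refine ciInf_le ⟨0, ?_⟩ (⟨D', hD', hE⟩ : {D' : ι → ℝ // (∀ i, 0 ≤ D' i) ∧ D' - E ∈ P})
  rintro _ ⟨D'', rfl⟩
  exact D''.2.1 Γ

theorem sigmaG_eq_zero_of_forall_notMem {E : ι → ℝ}
    (h : ∀ D' : ι → ℝ, (∀ i, 0 ≤ D' i) → D' - E ∉ P) : sigmaG P Γ E = 0 :=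
  have : IsEmpty {D' : ι → ℝ // (∀ i, 0 ≤ D' i) ∧ D' - E ∈ P} :=
    ⟨fun D' => h D' D'.2.1 D'.2.2⟩
  Real.iInf_of_isEmpty _

theorem sigmaG_smul_add_smul_le {E₁ E₂ D₁ D₂ : ι → ℝ} {t : ℝ} (ht₀ : 0 ≤ t) (ht₁ : t ≤ 1)
    (hD₁ : ∀ i, 0 ≤ D₁ i) (hE₁ : D₁ - E₁ ∈ P) (hD₂ : ∀ i, 0 ≤ D₂ i) (hE₂ : D₂ - E₂ ∈ P) :
    sigmaG P Γ (t • E₁ + (1 - t) • E₂) ≤ t * D₁ Γ + (1 - t) * D₂ Γ := by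
  have hcomb : t • D₁ + (1 - t) • D₂ - (t • E₁ + (1 - t) • E₂)
      = t • (D₁ - E₁) + (1 - t) • (D₂ - E₂) := by
    simp only [smul_sub]; abel
  refine sigmaG_le (D' := t • D₁ + (1 - t) • D₂) (fun i => ?_) ?_
  · exact add_nonneg (mul_nonneg ht₀ (hD₁ i)) (mul_nonneg (sub_nonneg.2 ht₁) (hD₂ i))
  · rw [hcomb]
    exact P.add_mem (P.smul_mem t hE₁) (P.smul_mem (1 - t) hE₂)

theorem le_of_tendsto_sigmaG {E A G : ι → ℝ} {N : ℝ}
    (hN : Tendsto (fun ε : ℝ => sigmaG P Γ (E + ε • A)) (𝓝[>] 0) (𝓝 N))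
    (hG : ∀ i, 0 ≤ G i) (hGE : G - E ∈ P) : N ≤ G Γ := by
  by_cases hS : ∃ ε₀ : ℝ, 0 < ε₀ ∧ ∃ D₀ : ι → ℝ, (∀ i, 0 ≤ D₀ i) ∧ D₀ - (E + ε₀ • A) ∈ P
  · obtain ⟨ε₀, hε₀, D₀, hD₀, hD₀E⟩ := hS
    have hbound : ∀ ε ∈ Set.Ioo 0 ε₀,
        sigmaG P Γ (E + ε • A) ≤ ε / ε₀ * D₀ Γ + (1 - ε / ε₀) * G Γ := by
      rintro ε ⟨hε, hεε₀⟩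
      have hsplit : E + ε • A = (ε / ε₀) • (E + ε₀ • A) + (1 - ε / ε₀) • E := by
        rw [smul_add, smul_smul, div_mul_cancel₀ _ hε₀.ne', sub_smul, one_smul]; abel
      rw [hsplit]
      exact sigmaG_smul_add_smul_le (by positivity) ((div_le_one hε₀).2 hεε₀.le)
        hD₀ hD₀E hG hGE
    have hlim : Tendsto (fun ε : ℝ => ε / ε₀ * D₀ Γ + (1 - ε / ε₀) * G Γ) (𝓝[>] 0)
        (𝓝 (G Γ)) := by
      refine tendsto_nhdsWithin_of_tendsto_nhds ?_
      convert (Continuous.tendsto (by fun_prop) 0 :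
        Tendsto (fun ε : ℝ => ε / ε₀ * D₀ Γ + (1 - ε / ε₀) * G Γ) _ _) using 2
      simp
    refine le_of_tendsto_of_tendsto hN hlim ?_
    filter_upwards [Ioo_mem_nhdsGT hε₀] using hbound
  · push Not at hS
    have hzero : (fun ε : ℝ => sigmaG P Γ (E + ε • A)) =ᶠ[𝓝[>] 0] fun _ => 0 :=
      eventually_nhdsWithin_of_forall fun ε hε =>
        sigmaG_eq_zero_of_forall_notMem fun D' hD' => hS ε hε D' hD'
    rw [tendsto_nhds_unique hN (tendsto_const_nhds.congr' hzero.symm)]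
    exact hG Γ

end SigmaG

theorem stmt3_general {ι : Type*} (P : Submodule ℝ (ι → ℝ))
    (PZ : AddSubgroup (ι → ℤ))
    (hPZ : ∀ v ∈ PZ, (fun i => ((v i : ℝ))) ∈ P)
    (A : ι → ℝ)
    (D : ι → ℤ)
    (N : ι → ℝ)
    (hN : ∀ Γ : ι, Filter.Tendsto
      (fun ε : ℝ => sigmaG P Γ ((fun i => ((D i : ℝ))) + ε • A))
      (nhdsWithin 0 (Set.Ioi 0)) (nhds (N Γ))) :
    ∀ G : ι → ℤ, (∀ i, 0 ≤ G i) → G - D ∈ PZ → ∀ i, ⌈N i⌉ ≤ G i := by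
  intro G hG hGD i
  have hGDℝ : (fun j => (G j : ℝ)) - (fun j => (D j : ℝ)) ∈ P := by
    convert hPZ _ hGD using 1
    ext j
    simp
  rw [Int.ceil_le]
  exact le_of_tendsto_sigmaG (G := fun j => (G j : ℝ)) (hN i)
    (fun j => Int.cast_nonneg_iff.mpr (hG j)) hGDℝ

/-- Lemma 2.5(2). Let `D` be an integral effective divisor on a smooth
projective variety. Then `H⁰(X, D) = H⁰(X, D − ⌈N_σ(D)⌉)`: every effective divisor `G`
(integrally) linearly equivalent to `D` contains the roundup of the negative part
`N_σ(D)` of the Nakayama–Zariski decomposition.  Here `N_σ(D)` has coefficients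
`N Γ = lim_{ε→0⁺} σ_Γ(D + εA)` for an ample divisor `A`; integral linear equivalence is
modeled by the subgroup `PZ` of integral principal divisors, compatibly with `P`. -/
theorem stmt3 {ι : Type*} (P : Submodule ℝ (ι → ℝ))
    (PZ : AddSubgroup (ι → ℤ))
    (hPZ : ∀ v ∈ PZ, (fun i => ((v i : ℝ))) ∈ P)
    (AmpR : (ι → ℝ) → Prop) (A : ι → ℝ) (hA : AmpR A)
    (D : ι → ℤ) (hD : ∀ i, 0 ≤ D i)
    (N : ι → ℝ)
    (hN : ∀ Γ : ι, Filter.Tendsto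
      (fun ε : ℝ => sigmaG P Γ ((fun i => ((D i : ℝ))) + ε • A))
      (nhdsWithin 0 (Set.Ioi 0)) (nhds (N Γ))) :
    ∀ G : ι → ℤ, (∀ i, 0 ≤ G i) → G - D ∈ PZ → ∀ i, ⌈N i⌉ ≤ G i :=
  stmt3_general P PZ hPZ A D N hN
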